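/- Let M = (A,B,C,D) be a discrete-time system and X ∈ ℂ^{n×n} Hermitian with X > 0 and Ŵ(X,M) > 0. Write Ŵ(X,M) = RᴴR with R invertible, and set F₁ := R⁻ᴴE₁, F₂ := R⁻ᴴE₂, α := ‖F₁‖₂, β := ‖F₂‖₂ (so α, β > 0). Let u, û, v, v̂ be unit vectors forming dominant singular pairs: F₁u = αû, F₁ᴴû = αu, F₂v = βv̂, F₂ᴴv̂ = βv. Then the X-passivity radius satisfies 1/(2αβ) ≤ ρ_M(X) ≤ 1/((1 + |v̂ᴴû|)·αβ) ≤ 1/(αβ). Moreover, if û and v̂ are linearly dependent, then ρ_M(X) = 1/(2αβ). -/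

import Mathlib

/-!
Writing `Ŵ(X,M) = RᴴR` and `Eᵢ = RᴴFᵢ`, the perturbed matrix factors as
`Rᴴ (1 + P + Pᴴ) R` with `P = F₁ΔF₂ᴴ`, so it is singular iff `1 + P + Pᴴ` is.
If `‖Δ‖ < 1/(2αβ)` then `‖P + Pᴴ‖ ≤ 2αβ‖Δ‖ < 1` and the Neumann series inverts `1 + P + Pᴴ`;
this is the lower bound. For the upper bound, let `a` be the unit scalar with `a·v̂ᴴû = |v̂ᴴû|`
and `t = 1/((1 + |v̂ᴴû|)αβ)`: the rank-one perturbation `Δ = -t·a·u vᴴ` has norm `t` and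
annihilates `a û + v̂`. If `û = c v̂` then `|v̂ᴴû| = |c| = 1` and the two bounds coincide.
-/

open Matrix
open scoped ComplexOrder

/-- The spectral norm (largest singular value) of a complex matrix. -/
noncomputable def spNorm {k l : Type*} [Fintype k] [Fintype l] [DecidableEq k] [DecidableEq l]
    (A : Matrix k l ℂ) : ℝ :=
  ‖(Matrix.toEuclideanLin A).toContinuousLinearMap‖

/-- The Euclidean norm of a complex vector. -/
noncomputable def vecNorm {k : Type*} [Fintype k] (v : k → ℂ) : ℝ :=
  Real.sqrt (∑ i, ‖v i‖ ^ 2)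

/-- `E₁ = [[I,0],[0,0],[0,I]]`. -/
noncomputable def Emat1 (n m : ℕ) : Matrix (Fin n ⊕ (Fin n ⊕ Fin m)) (Fin n ⊕ Fin m) ℂ :=
  fromBlocks 1 0 (fromRows 0 0) (fromRows 0 1)

/-- `E₂ = [[0,0],[I,0],[0,I]]`. -/
noncomputable def Emat2 (n m : ℕ) : Matrix (Fin n ⊕ (Fin n ⊕ Fin m)) (Fin n ⊕ Fin m) ℂ :=
  fromBlocks 0 0 (fromRows 1 0) (fromRows 0 1)

/-- The matrix `Ŵ(X,M) = [[X⁻¹, A, B],[Aᴴ, X, Cᴴ],[Bᴴ, C, Dᴴ + D]]`. -/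
noncomputable def What {n m : ℕ} (X A : Matrix (Fin n) (Fin n) ℂ)
    (B : Matrix (Fin n) (Fin m) ℂ) (C : Matrix (Fin m) (Fin n) ℂ)
    (D : Matrix (Fin m) (Fin m) ℂ) :
    Matrix (Fin n ⊕ (Fin n ⊕ Fin m)) (Fin n ⊕ (Fin n ⊕ Fin m)) ℂ :=
  fromBlocks X⁻¹ (fromCols A B) (fromRows Aᴴ Bᴴ) (fromBlocks X Cᴴ C (Dᴴ + D))

/-- The `X`-passivity radius: the infimum of the spectral norms of perturbations `Δ` of the
system data making `Ŵ(X,M) + E₁ΔE₂ᴴ + E₂ΔᴴE₁ᴴ` singular. -/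
noncomputable def XPassivityRadius {n m : ℕ} (X A : Matrix (Fin n) (Fin n) ℂ)
    (B : Matrix (Fin n) (Fin m) ℂ) (C : Matrix (Fin m) (Fin n) ℂ)
    (D : Matrix (Fin m) (Fin m) ℂ) : ℝ :=
  sInf {r : ℝ | ∃ Δ : Matrix (Fin n ⊕ Fin m) (Fin n ⊕ Fin m) ℂ,
    (What X A B C D + Emat1 n m * Δ * (Emat2 n m)ᴴ
      + Emat2 n m * Δᴴ * (Emat1 n m)ᴴ).det = 0 ∧ r = spNorm Δ}

open scoped Matrix.Norms.L2Operator

section Norms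

variable {k l : Type*} [Fintype k] [Fintype l]

lemma vecNorm_eq_norm_toLp (v : k → ℂ) : vecNorm v = ‖WithLp.toLp 2 v‖ := by
  rw [vecNorm, EuclideanSpace.norm_eq]

lemma vecNorm_smul (c : ℂ) (v : k → ℂ) : vecNorm (c • v) = ‖c‖ * vecNorm v := by
  rw [vecNorm_eq_norm_toLp, vecNorm_eq_norm_toLp, WithLp.toLp_smul, norm_smul]

lemma star_dotProduct_eq_inner (x y : k → ℂ) :
    star x ⬝ᵥ y = inner ℂ (WithLp.toLp 2 x) (WithLp.toLp 2 y) := by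
  rw [EuclideanSpace.inner_eq_star_dotProduct, dotProduct_comm]

lemma star_dotProduct_self (v : k → ℂ) : star v ⬝ᵥ v = ((vecNorm v ^ 2 : ℝ) : ℂ) := by
  rw [star_dotProduct_eq_inner, inner_self_eq_norm_sq_to_K, vecNorm_eq_norm_toLp]
  norm_cast

lemma star_dotProduct_self_eq_one {v : k → ℂ} (hv : vecNorm v = 1) : star v ⬝ᵥ v = 1 := by
  rw [star_dotProduct_self, hv]; norm_num

variable [DecidableEq k] [DecidableEq l]

lemma spNorm_eq_norm (A : Matrix k l ℂ) : spNorm A = ‖A‖ := rfl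

lemma spNorm_pos {A : Matrix k l ℂ} (hA : A ≠ 0) : 0 < spNorm A := (norm_pos_iff (a := A)).mpr hA

lemma spNorm_vecMulVec_star (u : k → ℂ) (v : l → ℂ) :
    spNorm (vecMulVec u (star v)) = vecNorm u * vecNorm v := by
  rw [← InnerProductSpace.symm_toEuclideanLin_rankOne (WithLp.toLp 2 u) (WithLp.toLp 2 v),
    spNorm, LinearEquiv.apply_symm_apply, vecNorm_eq_norm_toLp, vecNorm_eq_norm_toLp]
  exact InnerProductSpace.norm_rankOne _ _

end Norms

section Perturbation

variable {N K : Type*} [Fintype N] [Fintype K] [DecidableEq N]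

lemma det_conjTranspose_mul_self_add_eq_zero_iff {R : Matrix N N ℂ} (hR : IsUnit R)
    {E₁ E₂ F₁ F₂ : Matrix N K ℂ} (h₁ : Rᴴ * F₁ = E₁) (h₂ : Rᴴ * F₂ = E₂) (Δ : Matrix K K ℂ) :
    (Rᴴ * R + E₁ * Δ * E₂ᴴ + E₂ * Δᴴ * E₁ᴴ).det = 0
      ↔ (1 + F₁ * Δ * F₂ᴴ + F₂ * Δᴴ * F₁ᴴ).det = 0 := by
  have hfactor : Rᴴ * R + E₁ * Δ * E₂ᴴ + E₂ * Δᴴ * E₁ᴴ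
      = Rᴴ * (1 + F₁ * Δ * F₂ᴴ + F₂ * Δᴴ * F₁ᴴ) * R := by
    subst h₁ h₂
    simp only [conjTranspose_mul, conjTranspose_conjTranspose, Matrix.mul_add, Matrix.add_mul,
      Matrix.mul_one, Matrix.mul_assoc]
  have hdet : IsUnit R.det := (isUnit_iff_isUnit_det R).mp hR
  rw [hfactor, det_mul, det_mul, det_conjTranspose, mul_eq_zero, mul_eq_zero, star_eq_zero]
  simp [hdet.ne_zero]

lemma one_le_two_mul_spNorm_of_det_eq_zero {P : Matrix N N ℂ} (h : (1 + P + Pᴴ).det = 0) :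
    1 ≤ 2 * spNorm P := by
  by_contra! hlt
  have hsmall : ‖-(P + Pᴴ)‖ < 1 := calc
    ‖-(P + Pᴴ)‖ ≤ ‖P‖ + ‖Pᴴ‖ := (norm_neg _).trans_le (norm_add_le _ _)
    _ = 2 * spNorm P := by rw [l2_opNorm_conjTranspose, spNorm_eq_norm]; ring
    _ < 1 := hlt
  have hunit := isUnit_one_sub_of_norm_lt_one hsmall
  rw [sub_neg_eq_add, ← add_assoc] at hunit
  exact ((isUnit_iff_isUnit_det _).mp hunit).ne_zero h

variable [DecidableEq K]

lemma one_le_two_mul_spNorm_mul_of_det_eq_zero (F₁ F₂ : Matrix N K ℂ) {Δ : Matrix K K ℂ}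
    (h : (1 + F₁ * Δ * F₂ᴴ + F₂ * Δᴴ * F₁ᴴ).det = 0) :
    1 ≤ 2 * (spNorm F₁ * spNorm F₂ * spNorm Δ) := by
  have hadj : F₂ * Δᴴ * F₁ᴴ = (F₁ * Δ * F₂ᴴ)ᴴ := by
    simp only [conjTranspose_mul, conjTranspose_conjTranspose, Matrix.mul_assoc]
  rw [hadj] at h
  calc 1 ≤ 2 * spNorm (F₁ * Δ * F₂ᴴ) := one_le_two_mul_spNorm_of_det_eq_zero h
    _ ≤ 2 * (spNorm F₁ * spNorm F₂ * spNorm Δ) := by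
      gcongr
      calc ‖F₁ * Δ * F₂ᴴ‖ ≤ ‖F₁‖ * ‖Δ‖ * ‖F₂ᴴ‖ :=
            (l2_opNorm_mul _ _).trans (by gcongr; exact l2_opNorm_mul _ _)
        _ = spNorm F₁ * spNorm F₂ * spNorm Δ := by
            rw [l2_opNorm_conjTranspose, spNorm_eq_norm, spNorm_eq_norm, spNorm_eq_norm]; ring

end Perturbation

lemma Complex.exists_norm_eq_one_mul_eq_norm (s : ℂ) : ∃ a : ℂ, ‖a‖ = 1 ∧ a * s = ‖s‖ := by
  refine ⟨Complex.exp (↑(-Complex.arg s) * Complex.I), Complex.norm_exp_ofReal_mul_I _, ?_⟩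
  conv_lhs => arg 2; rw [← Complex.norm_mul_exp_arg_mul_I s]
  rw [mul_left_comm, ← Complex.exp_add, Complex.ofReal_neg, neg_mul, neg_add_cancel,
    Complex.exp_zero, mul_one]

section Witness

variable {N K L : Type*} [Fintype N] [Fintype K] [Fintype L]

lemma mul_vecMulVec_star_mul_conjTranspose_mulVec (F₁ : Matrix N K ℂ) (F₂ : Matrix N L ℂ)
    {u : K → ℂ} {v : L → ℂ} {x y : N → ℂ} {a b : ℂ}
    (hu : F₁ *ᵥ u = a • x) (hv : F₂ *ᵥ v = b • y) (w : N → ℂ) :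
    (F₁ * vecMulVec u (star v) * F₂ᴴ) *ᵥ w = (a * (star b * (star y ⬝ᵥ w))) • x := by
  rw [← mulVec_mulVec, ← mulVec_mulVec, vecMulVec_mulVec, op_smul_eq_smul, mulVec_smul, hu,
    dotProduct_mulVec, ← star_mulVec, hv, star_smul,
    smul_dotProduct, smul_smul, smul_eq_mul, mul_comm]

variable [DecidableEq N] [DecidableEq K]

lemma exists_det_eq_zero_of_singular_vectors (F₁ F₂ : Matrix N K ℂ) {α β : ℝ} (hαβ : 0 < α * β)
    {u v : K → ℂ} {uh vh : N → ℂ} (hu : vecNorm u = 1) (hv : vecNorm v = 1)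
    (huh : vecNorm uh = 1) (hvh : vecNorm vh = 1)
    (h₁ : F₁ *ᵥ u = (α : ℂ) • uh) (h₂ : F₂ *ᵥ v = (β : ℂ) • vh) :
    ∃ Δ : Matrix K K ℂ, (1 + F₁ * Δ * F₂ᴴ + F₂ * Δᴴ * F₁ᴴ).det = 0
      ∧ spNorm Δ = 1 / ((1 + ‖star vh ⬝ᵥ uh‖) * (α * β)) := by
  set s := star vh ⬝ᵥ uh
  set t := 1 / ((1 + ‖s‖) * (α * β))
  have ht : (t : ℂ) * ((1 + ‖s‖) * (α * β)) = 1 := by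
    norm_cast; exact one_div_mul_cancel (by positivity)
  obtain ⟨a, ha, has⟩ := Complex.exists_norm_eq_one_mul_eq_norm s
  have hconj : starRingEnd ℂ a * (a + starRingEnd ℂ s) = 1 + ‖s‖ := by
    rw [mul_add, ← map_mul, has, Complex.conj_ofReal, Complex.conj_mul', ha]
    push_cast; ring
  set w := a • uh + vh
  have hvhw : star vh ⬝ᵥ w = 1 + ‖s‖ := by
    rw [dotProduct_add, dotProduct_smul, star_dotProduct_self_eq_one hvh, smul_eq_mul, has, add_comm]
  have huhw : star uh ⬝ᵥ w = a + starRingEnd ℂ s := by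
    rw [dotProduct_add, dotProduct_smul, star_dotProduct_self_eq_one huh, smul_eq_mul, mul_one, star_dotProduct,
      Complex.star_def]
  refine ⟨(-(t * a)) • vecMulVec u (star v), ?_, ?_⟩
  · refine exists_mulVec_eq_zero_iff.mp ⟨w, fun hw => ?_, ?_⟩
    · rw [hw, dotProduct_zero] at hvhw
      have : (0 : ℝ) = 1 + ‖s‖ := by exact_mod_cast hvhw
      linarith [norm_nonneg s]
    · rw [conjTranspose_smul, conjTranspose_vecMulVec, star_star, Matrix.mul_smul, Matrix.smul_mul,
        Matrix.mul_smul, Matrix.smul_mul, add_mulVec, add_mulVec, one_mulVec, smul_mulVec,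
        smul_mulVec, mul_vecMulVec_star_mul_conjTranspose_mulVec F₁ F₂ h₁ h₂,
        mul_vecMulVec_star_mul_conjTranspose_mulVec F₂ F₁ h₂ h₁, hvhw, huhw, smul_smul, smul_smul]
      simp only [star_neg, star_mul', Complex.star_def, Complex.conj_ofReal]
      have hcoeff₁ : -(t * a) * (α * (β * (1 + ‖s‖))) = -a := by
        linear_combination (-a) * ht
      have hcoeff₂ : -(t * starRingEnd ℂ a) * (β * (α * (a + starRingEnd ℂ s))) = -1 := by
        linear_combination (-(t : ℂ) * α * β) * hconj - ht
      rw [hcoeff₁, hcoeff₂]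
      module
  · rw [spNorm_eq_norm, norm_smul, ← spNorm_eq_norm, spNorm_vecMulVec_star, hu, hv, norm_neg,
      norm_mul, ha, Complex.norm_real, Real.norm_of_nonneg (by positivity)]
    ring

end Witness

section PassivityRadius

variable {n m : ℕ}

lemma Emat1_ne_zero [Nonempty (Fin n ⊕ Fin m)] : Emat1 n m ≠ 0 := by
  intro h
  rcases Classical.arbitrary (Fin n ⊕ Fin m) with i | j
  · simpa [Emat1] using congrFun (congrFun h (Sum.inl i)) (Sum.inl i)
  · simpa [Emat1] using congrFun (congrFun h (Sum.inr (Sum.inr j))) (Sum.inr j)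

lemma Emat2_ne_zero [Nonempty (Fin n ⊕ Fin m)] : Emat2 n m ≠ 0 := by
  intro h
  rcases Classical.arbitrary (Fin n ⊕ Fin m) with i | j
  · simpa [Emat2] using congrFun (congrFun h (Sum.inr (Sum.inl i))) (Sum.inl i)
  · simpa [Emat2] using congrFun (congrFun h (Sum.inr (Sum.inr j))) (Sum.inr j)

variable {X A : Matrix (Fin n) (Fin n) ℂ} {B : Matrix (Fin n) (Fin m) ℂ}
  {C : Matrix (Fin m) (Fin n) ℂ} {D : Matrix (Fin m) (Fin m) ℂ}

lemma XPassivityRadius_le_spNorm {Δ : Matrix (Fin n ⊕ Fin m) (Fin n ⊕ Fin m) ℂ}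
    (hΔ : (What X A B C D + Emat1 n m * Δ * (Emat2 n m)ᴴ
      + Emat2 n m * Δᴴ * (Emat1 n m)ᴴ).det = 0) :
    XPassivityRadius X A B C D ≤ spNorm Δ :=
  csInf_le ⟨0, by rintro r ⟨Δ', -, rfl⟩; exact norm_nonneg _⟩ ⟨Δ, hΔ, rfl⟩

lemma le_XPassivityRadius {c : ℝ} {Δ₀ : Matrix (Fin n ⊕ Fin m) (Fin n ⊕ Fin m) ℂ}
    (hΔ₀ : (What X A B C D + Emat1 n m * Δ₀ * (Emat2 n m)ᴴ
      + Emat2 n m * Δ₀ᴴ * (Emat1 n m)ᴴ).det = 0)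
    (h : ∀ Δ : Matrix (Fin n ⊕ Fin m) (Fin n ⊕ Fin m) ℂ, (What X A B C D
      + Emat1 n m * Δ * (Emat2 n m)ᴴ + Emat2 n m * Δᴴ * (Emat1 n m)ᴴ).det = 0 → c ≤ spNorm Δ) :
    c ≤ XPassivityRadius X A B C D :=
  le_csInf ⟨_, Δ₀, hΔ₀, rfl⟩ (by rintro r ⟨Δ, hΔ, rfl⟩; exact h Δ hΔ)

end PassivityRadius

theorem stmt7_general {n m : ℕ} (A : Matrix (Fin n) (Fin n) ℂ) (B : Matrix (Fin n) (Fin m) ℂ)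
    (C : Matrix (Fin m) (Fin n) ℂ) (D : Matrix (Fin m) (Fin m) ℂ)
    (X : Matrix (Fin n) (Fin n) ℂ)
    (R : Matrix (Fin n ⊕ (Fin n ⊕ Fin m)) (Fin n ⊕ (Fin n ⊕ Fin m)) ℂ)
    (hR : IsUnit R) (hfact : What X A B C D = Rᴴ * R)
    (F₁ F₂ : Matrix (Fin n ⊕ (Fin n ⊕ Fin m)) (Fin n ⊕ Fin m) ℂ)
    (hF₁ : F₁ = (Rᴴ)⁻¹ * Emat1 n m) (hF₂ : F₂ = (Rᴴ)⁻¹ * Emat2 n m)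
    (α β : ℝ) (hα : α = spNorm F₁) (hβ : β = spNorm F₂)
    (u v : (Fin n ⊕ Fin m) → ℂ) (uh vh : (Fin n ⊕ (Fin n ⊕ Fin m)) → ℂ)
    (hu : vecNorm u = 1) (hv : vecNorm v = 1)
    (huh : vecNorm uh = 1) (hvh : vecNorm vh = 1)
    (h1 : F₁.mulVec u = (α : ℂ) • uh)
    (h3 : F₂.mulVec v = (β : ℂ) • vh) :
    1 / (2 * α * β) ≤ XPassivityRadius X A B C D
    ∧ XPassivityRadius X A B C D
        ≤ 1 / ((1 + ‖dotProduct (star vh) uh‖) * (α * β))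
    ∧ 1 / ((1 + ‖dotProduct (star vh) uh‖) * (α * β)) ≤ 1 / (α * β)
    ∧ ((∃ c : ℂ, uh = c • vh) → XPassivityRadius X A B C D = 1 / (2 * α * β)) := by
  have : Nonempty (Fin n ⊕ Fin m) := by
    by_contra!
    simp [vecNorm] at hu
  have hRH : IsUnit Rᴴ.det := by
    rw [det_conjTranspose]; exact ((isUnit_iff_isUnit_det R).mp hR).star
  have hRF₁ : Rᴴ * F₁ = Emat1 n m := hF₁ ▸ mul_nonsing_inv_cancel_left _ _ hRH
  have hRF₂ : Rᴴ * F₂ = Emat2 n m := hF₂ ▸ mul_nonsing_inv_cancel_left _ _ hRH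
  have hαβ : 0 < α * β := by
    rw [hα, hβ]
    refine mul_pos (spNorm_pos ?_) (spNorm_pos ?_) <;> rintro rfl
    exacts [Emat1_ne_zero (hRF₁.symm.trans (Matrix.mul_zero _)),
      Emat2_ne_zero (hRF₂.symm.trans (Matrix.mul_zero _))]
  have hsingular := hfact ▸ det_conjTranspose_mul_self_add_eq_zero_iff hR hRF₁ hRF₂
  obtain ⟨Δ₀, hΔ₀, hnorm⟩ :=
    exists_det_eq_zero_of_singular_vectors F₁ F₂ hαβ hu hv huh hvh h1 h3
  have hlower : 1 / (2 * α * β) ≤ XPassivityRadius X A B C D :=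
    le_XPassivityRadius ((hsingular Δ₀).mpr hΔ₀) fun Δ hΔ => by
      have := one_le_two_mul_spNorm_mul_of_det_eq_zero F₁ F₂ ((hsingular Δ).mp hΔ)
      rw [← hα, ← hβ] at this
      rw [div_le_iff₀ (by linarith)]
      linarith
  have hupper := hnorm ▸ XPassivityRadius_le_spNorm ((hsingular Δ₀).mpr hΔ₀)
  refine ⟨hlower, hupper,
    one_div_le_one_div_of_le hαβ (by nlinarith [norm_nonneg (star vh ⬝ᵥ uh)]), ?_⟩
  rintro ⟨c, rfl⟩
  rw [vecNorm_smul, hvh, mul_one] at huh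
  have hs : ‖star vh ⬝ᵥ (c • vh)‖ = 1 := by
    rw [dotProduct_smul, star_dotProduct_self_eq_one hvh, smul_eq_mul, mul_one, huh]
  rw [hs, one_add_one_eq_two, ← mul_assoc] at hupper
  exact le_antisymm hupper hlower

/-- bounds for the `X`-passivity radius in terms of the dominant singular
pairs of `F₁ = R⁻ᴴE₁` and `F₂ = R⁻ᴴE₂`, where `Ŵ(X,M) = RᴴR ≻ 0`:
`1/(2αβ) ≤ ρ_M(X) ≤ 1/((1 + |v̂ᴴû|)αβ) ≤ 1/(αβ)`, with equality `ρ_M(X) = 1/(2αβ)`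
when `û`, `v̂` are linearly dependent. -/
theorem stmt7 {n m : ℕ} (A : Matrix (Fin n) (Fin n) ℂ) (B : Matrix (Fin n) (Fin m) ℂ)
    (C : Matrix (Fin m) (Fin n) ℂ) (D : Matrix (Fin m) (Fin m) ℂ)
    (X : Matrix (Fin n) (Fin n) ℂ) (hX : X.PosDef)
    (hWpd : (What X A B C D).PosDef)
    (R : Matrix (Fin n ⊕ (Fin n ⊕ Fin m)) (Fin n ⊕ (Fin n ⊕ Fin m)) ℂ)
    (hR : IsUnit R) (hfact : What X A B C D = Rᴴ * R)
    (F₁ F₂ : Matrix (Fin n ⊕ (Fin n ⊕ Fin m)) (Fin n ⊕ Fin m) ℂ)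
    (hF₁ : F₁ = (Rᴴ)⁻¹ * Emat1 n m) (hF₂ : F₂ = (Rᴴ)⁻¹ * Emat2 n m)
    (α β : ℝ) (hα : α = spNorm F₁) (hβ : β = spNorm F₂)
    (u v : (Fin n ⊕ Fin m) → ℂ) (uh vh : (Fin n ⊕ (Fin n ⊕ Fin m)) → ℂ)
    (hu : vecNorm u = 1) (hv : vecNorm v = 1)
    (huh : vecNorm uh = 1) (hvh : vecNorm vh = 1)
    (h1 : F₁.mulVec u = (α : ℂ) • uh) (h2 : F₁ᴴ.mulVec uh = (α : ℂ) • u)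
    (h3 : F₂.mulVec v = (β : ℂ) • vh) (h4 : F₂ᴴ.mulVec vh = (β : ℂ) • v) :
    1 / (2 * α * β) ≤ XPassivityRadius X A B C D
    ∧ XPassivityRadius X A B C D
        ≤ 1 / ((1 + ‖dotProduct (star vh) uh‖) * (α * β))
    ∧ 1 / ((1 + ‖dotProduct (star vh) uh‖) * (α * β)) ≤ 1 / (α * β)
    ∧ ((∃ c : ℂ, uh = c • vh) → XPassivityRadius X A B C D = 1 / (2 * α * β)) :=
  stmt7_general A B C D X R hR hfact F₁ F₂ hF₁ hF₂ α β hα hβ u v uh vh hu hv huh hvh h1 h3
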